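/- arXiv:2002.12388 — 5 statements merged into one kernel-verified Lean document; each statement's English description precedes it below -/
import Mathlib

section
/- Let [f₁ … f_d] be a one-dimensional interacting governing equation with interaction range (s₁, s₂) and separation rank N (as in Definition of one-dimensional interacting systems), and regard each f_l as a tensor in V^{⊗d}. Then for each fixed l, the separation rank of f_l with respect to the bipartition P_k = {{x₁,…,x_k}, {x_{k+1},…,x_d}} is at most N when l − s₁ ≤ k < l + s₂, and equal to at most 1 for all other k. Consequently f_l admits a tensor-train representation with ranks r_k ≤ N for l−s₁ ≤ k < l+s₂ and r_k = 1 otherwise. -/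
/-- The `l`-th component (1-based) of a one-dimensional interacting governing equation
with interaction range `(s₁, s₂)`; out-of-range variables contribute the factor `1`. -/
def fOne (d s₁ s₂ pb : ℕ) (g : Fin pb → ℝ → ℝ)
    (I : Finset (Fin (s₁ + s₂ + 1) → Fin pb)) (l : ℕ) (x : Fin d → ℝ) : ℝ :=
  ∑ w ∈ I, ∏ j : Fin (s₁ + s₂ + 1),
    (if h : 1 ≤ (l : ℤ) + (j : ℤ) - (s₁ : ℤ) ∧ (l : ℤ) + (j : ℤ) - (s₁ : ℤ) ≤ (d : ℤ) then
        g (w j) (x ⟨((l : ℤ) + (j : ℤ) - (s₁ : ℤ)).toNat - 1, by omega⟩) else 1)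

lemma splitAux (d s₁ s₂ pb : ℕ) (g : Fin pb → ℝ → ℝ)
    (J : Finset (Fin (s₁ + s₂ + 1) → Fin pb)) (l k : ℕ)
    (hk1 : 1 ≤ k) (hk2 : k ≤ d - 1) (hd : 1 ≤ d) :
    ∃ (u : Fin J.card → (Fin k → ℝ) → ℝ)
      (w : Fin J.card → (Fin (d - k) → ℝ) → ℝ),
      (∀ x : Fin d → ℝ, fOne d s₁ s₂ pb g J l x =
        ∑ j : Fin J.card, u j (fun i => x ⟨(i : ℕ), by omega⟩) *
          w j (fun i => x ⟨k + (i : ℕ), by omega⟩)) ∧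
      (k + s₁ < l → ∀ j y, u j y = 1) ∧
      (l + s₂ ≤ k → ∀ j z, w j z = 1) := by
  refine ⟨fun j y => ∏ j' : Fin (s₁ + s₂ + 1),
      (if h : 1 ≤ (l : ℤ) + (j' : ℤ) - (s₁ : ℤ) ∧ (l : ℤ) + (j' : ℤ) - (s₁ : ℤ) ≤ (k : ℤ) then
        g ((J.equivFin.symm j).1 j') (y ⟨((l : ℤ) + (j' : ℤ) - (s₁ : ℤ)).toNat - 1, by omega⟩)
      else 1),
    fun j z => ∏ j' : Fin (s₁ + s₂ + 1),
      (if h : (k : ℤ) + 1 ≤ (l : ℤ) + (j' : ℤ) - (s₁ : ℤ) ∧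
          (l : ℤ) + (j' : ℤ) - (s₁ : ℤ) ≤ (d : ℤ) then
        g ((J.equivFin.symm j).1 j') (z ⟨((l : ℤ) + (j' : ℤ) - (s₁ : ℤ)).toNat - 1 - k, by omega⟩)
      else 1),
    ?_, ?_, ?_⟩
  · intro x
    rw [fOne, ← Finset.sum_coe_sort J, ← Equiv.sum_comp J.equivFin.symm]
    refine Finset.sum_congr rfl fun j _ => ?_
    rw [← Finset.prod_mul_distrib]
    refine Finset.prod_congr rfl fun j' _ => ?_
    by_cases h1 : 1 ≤ (l : ℤ) + (j' : ℤ) - (s₁ : ℤ) ∧ (l : ℤ) + (j' : ℤ) - (s₁ : ℤ) ≤ (k : ℤ)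
    · rw [dif_pos (show (1:ℤ) ≤ _ ∧ _ ≤ (d:ℤ) by omega), dif_pos h1, dif_neg (by omega), mul_one]
    · by_cases h2 : (k : ℤ) + 1 ≤ (l : ℤ) + (j' : ℤ) - (s₁ : ℤ) ∧
          (l : ℤ) + (j' : ℤ) - (s₁ : ℤ) ≤ (d : ℤ)
      · rw [dif_pos (by omega), dif_neg h1, dif_pos h2, one_mul]
        beta_reduce
        congr 1
        exact congrArg x (Fin.ext (by simp only [Fin.val_mk]; omega))
      · rw [dif_neg (by omega), dif_neg h1, dif_neg h2, mul_one]
  · intro hlk j y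
    refine Finset.prod_eq_one fun j' _ => ?_
    rw [dif_neg]
    have := j'.isLt
    omega
  · intro hlk j z
    refine Finset.prod_eq_one fun j' _ => ?_
    rw [dif_neg]
    have := j'.isLt
    omega

/-- For a one-dimensional interacting system with range `(s₁,s₂)` and
separation rank `N`, each component `f_l` has separation rank at most `N` with respect to
the bipartition `{{x₁,…,x_k},{x_{k+1},…,x_d}}` when `l - s₁ ≤ k < l + s₂`, and at most `1`
for all other cuts `k`; hence `f_l` has a tensor-train representation with ranks `r_k ≤ N`
inside the interaction window and `r_k = 1` outside. -/
theorem stmt5 (d s₁ s₂ N pb : ℕ) (g : Fin pb → ℝ → ℝ)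
    (I : ℕ → Finset (Fin (s₁ + s₂ + 1) → Fin pb))
    (hcard : ∀ l, (I l).card ≤ N) :
    ∀ (l k : ℕ) (_hl1 : 1 ≤ l) (_hl2 : l ≤ d) (_hk1 : 1 ≤ k) (_hk2 : k ≤ d - 1),
      ((l - s₁ ≤ k ∧ k < l + s₂) →
        ∃ (r : ℕ) (_hr : r ≤ N) (u : Fin r → (Fin k → ℝ) → ℝ)
          (w : Fin r → (Fin (d - k) → ℝ) → ℝ),
          ∀ x : Fin d → ℝ, fOne d s₁ s₂ pb g (I l) l x =
            ∑ j : Fin r, u j (fun i => x ⟨(i : ℕ), by omega⟩) *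
              w j (fun i => x ⟨k + (i : ℕ), by omega⟩)) ∧
      (¬ (l - s₁ ≤ k ∧ k < l + s₂) →
        ∃ (r : ℕ) (_hr : r ≤ 1) (u : Fin r → (Fin k → ℝ) → ℝ)
          (w : Fin r → (Fin (d - k) → ℝ) → ℝ),
          ∀ x : Fin d → ℝ, fOne d s₁ s₂ pb g (I l) l x =
            ∑ j : Fin r, u j (fun i => x ⟨(i : ℕ), by omega⟩) *
              w j (fun i => x ⟨k + (i : ℕ), by omega⟩)) := by
  intro l k hl1 hl2 hk1 hk2
  obtain ⟨u, w, heq, hu, hw⟩ :=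
    splitAux d s₁ s₂ pb g (I l) l k hk1 hk2 (le_trans hl1 hl2)
  constructor
  · intro _
    exact ⟨(I l).card, hcard l, u, w, heq⟩
  · intro hn
    have hcases : k + s₁ < l ∨ l + s₂ ≤ k := by omega
    rcases hcases with hc | hc
    · refine ⟨1, le_refl 1, fun _ _ => 1, fun _ z => ∑ j, w j z, fun x => ?_⟩
      rw [heq x]
      simp only [Fin.sum_univ_one, one_mul]
      exact Finset.sum_congr rfl fun j _ => by rw [hu hc j, one_mul]
    · refine ⟨1, le_refl 1, fun _ y => ∑ j, u j y, fun _ _ => 1, fun x => ?_⟩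
      rw [heq x]
      simp only [Fin.sum_univ_one, mul_one]
      exact Finset.sum_congr rfl fun j _ => by rw [hw hc j, mul_one]
end

section
/- Let [f₁ … f_d] be a one-dimensional interacting governing equation with interaction range (s₁, s₂) and separation rank N, and encode the whole system as the single tensor f = ∑_{l=1}^d θ_l ⊗ e_l ∈ V^{⊗d} ⊗ ℝ^d, where θ_l ∈ V^{⊗d} is the tensor representing f_l and e_l is the l-th standard basis vector of ℝ^d. Then for each k ∈ {1,…,d−1}, the separation rank of f with respect to the bipartition {{x₁,…,x_k}, {x_{k+1},…,x_d, l}} (the equation-label index grouped with the right block) is at most k − s₂ + 1 + N(s₁ + s₂). -/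
def facF (d s₁ s₂ pb : ℕ) (g : Fin pb → ℝ → ℝ) (L : ℕ)
    (wv : Fin (s₁ + s₂ + 1) → Fin pb) (x : Fin d → ℝ) (j : Fin (s₁ + s₂ + 1)) : ℝ :=
  if h : 1 ≤ (L : ℤ) + (j : ℤ) - (s₁ : ℤ) ∧ (L : ℤ) + (j : ℤ) - (s₁ : ℤ) ≤ (d : ℤ) then
    g (wv j) (x ⟨((L : ℤ) + (j : ℤ) - (s₁ : ℤ)).toNat - 1, by omega⟩) else 1

lemma fOne_eq (d s₁ s₂ pb : ℕ) (g : Fin pb → ℝ → ℝ)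
    (I : Finset (Fin (s₁ + s₂ + 1) → Fin pb)) (L : ℕ) (x : Fin d → ℝ) :
    fOne d s₁ s₂ pb g I L x = ∑ wv ∈ I, ∏ j, facF d s₁ s₂ pb g L wv x j := rfl

def Lfac (k s₁ s₂ pb : ℕ) (g : Fin pb → ℝ → ℝ) (L : ℕ)
    (wv : Fin (s₁ + s₂ + 1) → Fin pb) (xL : Fin k → ℝ) (j : Fin (s₁ + s₂ + 1)) : ℝ :=
  if h : 1 ≤ (L : ℤ) + (j : ℤ) - (s₁ : ℤ) ∧ (L : ℤ) + (j : ℤ) - (s₁ : ℤ) ≤ (k : ℤ) then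
    g (wv j) (xL ⟨((L : ℤ) + (j : ℤ) - (s₁ : ℤ)).toNat - 1, by omega⟩) else 1

def Rfac (d k s₁ s₂ pb : ℕ) (g : Fin pb → ℝ → ℝ) (L : ℕ)
    (wv : Fin (s₁ + s₂ + 1) → Fin pb) (xR : Fin (d - k) → ℝ) (j : Fin (s₁ + s₂ + 1)) : ℝ :=
  if h : (k : ℤ) + 1 ≤ (L : ℤ) + (j : ℤ) - (s₁ : ℤ) ∧ (L : ℤ) + (j : ℤ) - (s₁ : ℤ) ≤ (d : ℤ) then
    g (wv j) (xR ⟨((L : ℤ) + (j : ℤ) - (s₁ : ℤ)).toNat - 1 - k, by omega⟩) else 1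

lemma facF_split (d k s₁ s₂ pb : ℕ) (g : Fin pb → ℝ → ℝ) (L : ℕ)
    (wv : Fin (s₁ + s₂ + 1) → Fin pb) (x : Fin d → ℝ) (hkd : k < d) (j : Fin (s₁ + s₂ + 1)) :
    facF d s₁ s₂ pb g L wv x j =
      Lfac k s₁ s₂ pb g L wv (fun i => x ⟨(i : ℕ), by omega⟩) j *
      Rfac d k s₁ s₂ pb g L wv (fun i => x ⟨k + (i : ℕ), by omega⟩) j := by
  unfold facF Lfac Rfac
  by_cases hC : 1 ≤ (L : ℤ) + (j : ℤ) - (s₁ : ℤ) ∧ (L : ℤ) + (j : ℤ) - (s₁ : ℤ) ≤ (d : ℤ)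
  · rw [dif_pos hC]
    by_cases hL : (L : ℤ) + (j : ℤ) - (s₁ : ℤ) ≤ (k : ℤ)
    · rw [dif_pos ⟨hC.1, hL⟩, dif_neg (by omega), mul_one]
    · rw [dif_neg (by omega), dif_pos ⟨by omega, hC.2⟩, one_mul]
      refine congrArg (g (wv j)) (congrArg x ?_)
      simp only [Fin.mk.injEq]
      omega
  · rw [dif_neg hC, dif_neg (by omega), dif_neg (by omega), mul_one]

lemma facF_eq_Lfac (d k s₁ s₂ pb : ℕ) (g : Fin pb → ℝ → ℝ) (L : ℕ)
    (wv : Fin (s₁ + s₂ + 1) → Fin pb) (x : Fin d → ℝ) (hkd : k < d)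
    (hw : (L : ℤ) + (s₂ : ℤ) ≤ (k : ℤ)) (j : Fin (s₁ + s₂ + 1)) :
    facF d s₁ s₂ pb g L wv x j =
      Lfac k s₁ s₂ pb g L wv (fun i => x ⟨(i : ℕ), by omega⟩) j := by
  have hj : (j : ℕ) < s₁ + s₂ + 1 := j.isLt
  unfold facF Lfac
  by_cases h1 : 1 ≤ (L : ℤ) + (j : ℤ) - (s₁ : ℤ)
  · rw [dif_pos ⟨h1, by omega⟩, dif_pos ⟨h1, by omega⟩]
  · rw [dif_neg (by omega), dif_neg (by omega)]

lemma facF_eq_Rfac (d k s₁ s₂ pb : ℕ) (g : Fin pb → ℝ → ℝ) (L : ℕ)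
    (wv : Fin (s₁ + s₂ + 1) → Fin pb) (x : Fin d → ℝ) (hkd : k < d)
    (hw : (k : ℤ) + 1 + (s₁ : ℤ) ≤ (L : ℤ)) (j : Fin (s₁ + s₂ + 1)) :
    facF d s₁ s₂ pb g L wv x j =
      Rfac d k s₁ s₂ pb g L wv (fun i => x ⟨k + (i : ℕ), by omega⟩) j := by
  have hj : (j : ℕ) < s₁ + s₂ + 1 := j.isLt
  unfold facF Rfac
  by_cases h1 : (L : ℤ) + (j : ℤ) - (s₁ : ℤ) ≤ (d : ℤ)
  · rw [dif_pos ⟨by omega, h1⟩, dif_pos ⟨by omega, h1⟩]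
    refine congrArg (g (wv j)) (congrArg x ?_)
    simp only [Fin.mk.injEq]
    omega
  · rw [dif_neg (by omega), dif_neg (by omega)]

lemma sum_pad {c n : ℕ} (h : c ≤ n) (F : Fin c → ℝ) :
    ∑ m : Fin n, (if hm : (m : ℕ) < c then F ⟨m, hm⟩ else 0) = ∑ m : Fin c, F m := by
  have h2 : ∑ m : Fin c, F m = ∑ i : Fin c, if hm : (i : ℕ) < c then F ⟨i, hm⟩ else 0 :=
    Finset.sum_congr rfl
      (fun i _ => ((dif_pos i.isLt).trans (congrArg F (Fin.eta i i.isLt))).symm)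
  rw [h2, Fin.sum_univ_eq_sum_range (fun i => if hm : i < c then F ⟨i, hm⟩ else 0) n,
    Fin.sum_univ_eq_sum_range (fun i => if hm : i < c then F ⟨i, hm⟩ else 0) c]
  exact (Finset.sum_subset (Finset.range_subset_range.mpr h)
    (fun i _ hi => dif_neg (by simpa using hi))).symm

lemma sum_elem {α : Type*} (s : Finset α) {n : ℕ} (h : s.card ≤ n) (F : α → ℝ) :
    ∑ m : Fin n, (if hm : (m : ℕ) < s.card then F ((s.equivFin.symm ⟨m, hm⟩ : s) : α) else 0)
      = ∑ a ∈ s, F a := by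
  rw [sum_pad h (fun m => F ((s.equivFin.symm m : s) : α)),
    Equiv.sum_comp s.equivFin.symm (fun a => F (a : α)), Finset.sum_coe_sort]

noncomputable def Ufun (d k s₁ s₂ N pb : ℕ) (g : Fin pb → ℝ → ℝ)
    (I : ℕ → Finset (Fin (s₁ + s₂ + 1) → Fin pb)) :
    ((Fin (k - s₂) ⊕ Fin 1) ⊕ Fin N × Fin (s₁ + s₂)) → (Fin k → ℝ) → ℝ
  | .inl (.inl j) => fun xL =>
      ∑ wv ∈ I ((j : ℕ) + 1), ∏ j', Lfac k s₁ s₂ pb g ((j : ℕ) + 1) wv xL j'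
  | .inl (.inr _) => fun _ => 1
  | .inr (m, t) => fun xL =>
      if hm : (m : ℕ) < (I (k - s₂ + 1 + (t : ℕ))).card then
        ∏ j', Lfac k s₁ s₂ pb g (k - s₂ + 1 + (t : ℕ))
          (((I (k - s₂ + 1 + (t : ℕ))).equivFin.symm ⟨m, hm⟩ : _) : Fin (s₁ + s₂ + 1) → Fin pb)
          xL j'
      else 0

noncomputable def Wfun (d k s₁ s₂ N pb : ℕ) (g : Fin pb → ℝ → ℝ)
    (I : ℕ → Finset (Fin (s₁ + s₂ + 1) → Fin pb)) :
    ((Fin (k - s₂) ⊕ Fin 1) ⊕ Fin N × Fin (s₁ + s₂)) → (Fin (d - k) → ℝ) → Fin d → ℝ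
  | .inl (.inl j) => fun _ l => if (l : ℕ) + 1 = (j : ℕ) + 1 then 1 else 0
  | .inl (.inr _) => fun xR l =>
      if k + s₁ + 1 ≤ (l : ℕ) + 1 then
        ∑ wv ∈ I ((l : ℕ) + 1), ∏ j', Rfac d k s₁ s₂ pb g ((l : ℕ) + 1) wv xR j'
      else 0
  | .inr (m, t) => fun xR l =>
      if (l : ℕ) + 1 = k - s₂ + 1 + (t : ℕ) ∧ (l : ℕ) + 1 ≤ k + s₁ then
        (if hm : (m : ℕ) < (I (k - s₂ + 1 + (t : ℕ))).card then
          ∏ j', Rfac d k s₁ s₂ pb g (k - s₂ + 1 + (t : ℕ))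
            (((I (k - s₂ + 1 + (t : ℕ))).equivFin.symm ⟨m, hm⟩ : _) : Fin (s₁ + s₂ + 1) → Fin pb)
            xR j'
        else 0)
      else 0


/-- Encoding the whole system `[f₁ … f_d]` as the single tensor
`f = ∑_l θ_l ⊗ e_l` (with the equation-label index grouped with the right block), the
separation rank of `f` with respect to the bipartition
`{{x₁,…,x_k}, {x_{k+1},…,x_d, l}}` is at most `k - s₂ + 1 + N(s₁ + s₂)`. -/
theorem stmt6 (d s₁ s₂ N pb : ℕ) (g : Fin pb → ℝ → ℝ)
    (I : ℕ → Finset (Fin (s₁ + s₂ + 1) → Fin pb))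
    (hcard : ∀ l, (I l).card ≤ N) :
    ∀ (k : ℕ) (_hk1 : 1 ≤ k) (_hk2 : k ≤ d - 1),
      ∃ (r : ℕ) (_hr : r ≤ k - s₂ + 1 + N * (s₁ + s₂))
        (u : Fin r → (Fin k → ℝ) → ℝ)
        (w : Fin r → (Fin (d - k) → ℝ) → Fin d → ℝ),
        ∀ (x : Fin d → ℝ) (l : Fin d),
          fOne d s₁ s₂ pb g (I ((l : ℕ) + 1)) ((l : ℕ) + 1) x =
            ∑ j : Fin r, u j (fun i => x ⟨(i : ℕ), by omega⟩) *
              w j (fun i => x ⟨k + (i : ℕ), by omega⟩) l := by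
  intro k hk1 hk2
  have hkd : k < d := by omega
  have E : ((Fin (k - s₂) ⊕ Fin 1) ⊕ Fin N × Fin (s₁ + s₂)) ≃ Fin (k - s₂ + 1 + N * (s₁ + s₂)) :=
    (Equiv.sumCongr finSumFinEquiv finProdFinEquiv).trans finSumFinEquiv
  refine ⟨k - s₂ + 1 + N * (s₁ + s₂), le_refl _,
    fun j => Ufun d k s₁ s₂ N pb g I (E.symm j),
    fun j => Wfun d k s₁ s₂ N pb g I (E.symm j), ?_⟩
  intro x l
  have hl := l.isLt
  rw [Equiv.sum_comp E.symm
    (fun i => Ufun d k s₁ s₂ N pb g I i (fun i => x ⟨(i : ℕ), by omega⟩) *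
      Wfun d k s₁ s₂ N pb g I i (fun i => x ⟨k + (i : ℕ), by omega⟩) l),
    Fintype.sum_sum_type, Fintype.sum_sum_type, Fin.sum_univ_one, Fintype.sum_prod_type_right]
  simp only [Ufun, Wfun]
  by_cases hA : (l : ℕ) + 1 ≤ k - s₂
  · -- window entirely in the left block
    have h2 : ¬(k + s₁ + 1 ≤ (l : ℕ) + 1) := by omega
    have h3 : ∀ t : Fin (s₁ + s₂),
        ¬((l : ℕ) + 1 = k - s₂ + 1 + (t : ℕ) ∧ (l : ℕ) + 1 ≤ k + s₁) := fun t => by omega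
    simp only [h2, h3, if_false, mul_zero, Finset.sum_const_zero, add_zero]
    rw [Finset.sum_eq_single (⟨(l : ℕ), by omega⟩ : Fin (k - s₂))]
    · rw [if_pos rfl, mul_one, fOne_eq]
      exact Finset.sum_congr rfl fun wv _ => Finset.prod_congr rfl fun j' _ =>
        facF_eq_Lfac d k s₁ s₂ pb g ((l : ℕ) + 1) wv x hkd (by omega) j'
    · intro j _ hj
      have : ¬((l : ℕ) + 1 = (j : ℕ) + 1) :=
        fun hc => hj (Fin.ext (show (j : ℕ) = (l : ℕ) by omega))
      rw [if_neg this, mul_zero]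
    · intro h; exact absurd (Finset.mem_univ _) h
  · by_cases hC : k + s₁ + 1 ≤ (l : ℕ) + 1
    · -- window entirely in the right block
      have h1 : ∀ j : Fin (k - s₂), ¬((l : ℕ) + 1 = (j : ℕ) + 1) := fun j => by
        have := j.isLt; omega
      have h3 : ∀ t : Fin (s₁ + s₂),
          ¬((l : ℕ) + 1 = k - s₂ + 1 + (t : ℕ) ∧ (l : ℕ) + 1 ≤ k + s₁) := fun t => by
        have := t.isLt; omega
      simp only [h1, h3, if_false, mul_zero, Finset.sum_const_zero, add_zero, zero_add]
      rw [if_pos hC, one_mul, fOne_eq]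
      exact Finset.sum_congr rfl fun wv _ => Finset.prod_congr rfl fun j' _ =>
        facF_eq_Rfac d k s₁ s₂ pb g ((l : ℕ) + 1) wv x hkd (by omega) j'
    · -- window crossing the cut
      have h1 : ∀ j : Fin (k - s₂), ¬((l : ℕ) + 1 = (j : ℕ) + 1) := fun j => by
        have := j.isLt; omega
      have h2 : ¬(k + s₁ + 1 ≤ (l : ℕ) + 1) := hC
      simp only [h1, h2, if_false, mul_zero, Finset.sum_const_zero, add_zero, zero_add]
      have hst : (l : ℕ) + 1 - (k - s₂ + 1) < s₁ + s₂ := by omega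
      rw [Finset.sum_eq_single (⟨(l : ℕ) + 1 - (k - s₂ + 1), hst⟩ : Fin (s₁ + s₂))]
      · have hteq : k - s₂ + 1 + ((⟨(l : ℕ) + 1 - (k - s₂ + 1), hst⟩ : Fin (s₁ + s₂)) : ℕ)
            = (l : ℕ) + 1 := by
          show k - s₂ + 1 + ((l : ℕ) + 1 - (k - s₂ + 1)) = (l : ℕ) + 1
          omega
        rw [hteq]
        have merge : ∀ m : Fin N,
            (if hm : (m : ℕ) < (I ((l : ℕ) + 1)).card then
              ∏ j', Lfac k s₁ s₂ pb g ((l : ℕ) + 1)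
                (((I ((l : ℕ) + 1)).equivFin.symm ⟨m, hm⟩ : _) : Fin (s₁ + s₂ + 1) → Fin pb)
                (fun i => x ⟨(i : ℕ), by omega⟩) j'
            else 0) *
            (if (l : ℕ) + 1 = (l : ℕ) + 1 ∧ (l : ℕ) + 1 ≤ k + s₁ then
              (if hm : (m : ℕ) < (I ((l : ℕ) + 1)).card then
                ∏ j', Rfac d k s₁ s₂ pb g ((l : ℕ) + 1)
                  (((I ((l : ℕ) + 1)).equivFin.symm ⟨m, hm⟩ : _) : Fin (s₁ + s₂ + 1) → Fin pb)
                  (fun i => x ⟨k + (i : ℕ), by omega⟩) j'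
              else 0)
            else 0) =
            (if hm : (m : ℕ) < (I ((l : ℕ) + 1)).card then
              (∏ j', Lfac k s₁ s₂ pb g ((l : ℕ) + 1)
                (((I ((l : ℕ) + 1)).equivFin.symm ⟨m, hm⟩ : _) : Fin (s₁ + s₂ + 1) → Fin pb)
                (fun i => x ⟨(i : ℕ), by omega⟩) j') *
              (∏ j', Rfac d k s₁ s₂ pb g ((l : ℕ) + 1)
                (((I ((l : ℕ) + 1)).equivFin.symm ⟨m, hm⟩ : _) : Fin (s₁ + s₂ + 1) → Fin pb)
                (fun i => x ⟨k + (i : ℕ), by omega⟩) j')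
            else 0) := by
          intro m
          rw [if_pos ⟨rfl, by omega⟩]
          by_cases hm : (m : ℕ) < (I ((l : ℕ) + 1)).card
          · rw [dif_pos hm, dif_pos hm, dif_pos hm]
          · rw [dif_neg hm, dif_neg hm, dif_neg hm, mul_zero]
        rw [Finset.sum_congr rfl fun m _ => merge m,
          sum_elem (I ((l : ℕ) + 1)) (hcard _)
            (fun wv =>
              (∏ j', Lfac k s₁ s₂ pb g ((l : ℕ) + 1) wv (fun i => x ⟨(i : ℕ), by omega⟩) j') *
              (∏ j', Rfac d k s₁ s₂ pb g ((l : ℕ) + 1) wv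
                (fun i => x ⟨k + (i : ℕ), by omega⟩) j')),
          fOne_eq]
        refine Finset.sum_congr rfl fun wv _ => ?_
        rw [← Finset.prod_mul_distrib]
        exact Finset.prod_congr rfl fun j' _ =>
          facF_split d k s₁ s₂ pb g ((l : ℕ) + 1) wv x hkd j'
      · intro t _ ht
        refine Finset.sum_eq_zero fun m _ => ?_
        have : ¬((l : ℕ) + 1 = k - s₂ + 1 + (t : ℕ) ∧ (l : ℕ) + 1 ≤ k + s₁) := fun hc =>
          ht (Fin.ext (show (t : ℕ) = (l : ℕ) + 1 - (k - s₂ + 1) by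
            obtain ⟨hc1, hc2⟩ := hc; omega))
        rw [if_neg this, mul_zero]
      · intro h; exact absurd (Finset.mem_univ _) h
end

section
/- Consider the Fermi-Pasta-Ulam-Tsingou right-hand side f_l(x₁,…,x_d) = (x_{l+1} − 2x_l + x_{l-1}) + β(x_{l+1} − x_l)³ − β(x_l − x_{l-1})³ (with x₀ = x_{d+1} = 0), for a fixed l with 1 < l < d. Then its coefficient tensor θ_l with respect to the monomial dictionary {1, x, x², x³} in each variable (so p̃ = 4) has k-th unfolding rank at most 4 for k ∈ {l−1, l} and unfolding rank exactly 1 for all k with |k − l| > 1 or k < l−1 (i.e., r_k = 1 for k ∉ {l−1, l}). -/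
/-!
The coefficient tensor of a polynomial is determined by the polynomial, so `θ` is supported on
multi-indices that only involve the three variables `x_{l-1}, x_l, x_{l+1}` (positions
`l-2, l-1, l` counting from `0`). A cut `k` that leaves these positions on one side gives an
unfolding with a single nonzero row or column; a cut separating one of them from the other two
gives at most `4` nonzero rows or columns, one for each exponent of the separated variable.
Finally `θ ≠ 0` because `f_l` does not vanish identically, so no unfolding has rank `0`.
-/

open MvPolynomial

/-- The `k`-th unfolding matrix of a tensor `θ ∈ ℝ^{p^d}`. -/
def unfold (p d k : ℕ) (θ : (Fin d → Fin p) → ℝ) :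
    Matrix (Fin k → Fin p) (Fin (d - k) → Fin p) ℝ :=
  fun a b => θ (fun i => if h : (i : ℕ) < k then a ⟨i, h⟩ else b ⟨(i : ℕ) - k, by omega⟩)

namespace Matrix

variable {K m n : Type*} [Field K] [Fintype m] [Fintype n]

theorem rank_pos_of_ne_zero {M : Matrix m n K} (hM : M ≠ 0) : 0 < M.rank := by
  rw [rank_eq_finrank_span_row, Nat.pos_iff_ne_zero, Ne, Submodule.finrank_eq_zero,
    Submodule.span_eq_bot]
  contrapose! hM
  ext i j
  simpa using congrFun (hM _ ⟨i, rfl⟩) j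

theorem rank_le_card_of_row_eq_zero (M : Matrix m n K) (s : Finset m)
    (hs : ∀ i ∉ s, M i = 0) : M.rank ≤ s.card := by
  classical
  rw [rank_eq_finrank_span_row]
  calc Module.finrank K (Submodule.span K (Set.range M.row))
      ≤ Module.finrank K (Submodule.span K (s.image M.row : Set (n → K))) := by
        refine Submodule.finrank_mono (Submodule.span_le.2 ?_)
        rintro _ ⟨i, rfl⟩
        by_cases hi : i ∈ s
        · exact Submodule.subset_span (Finset.mem_coe.2 (Finset.mem_image_of_mem _ hi))
        · simp [Matrix.row, hs i hi]
    _ ≤ (s.image M.row).card := finrank_span_finset_le_card _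
    _ ≤ s.card := Finset.card_image_le

theorem rank_le_card_of_col_eq_zero (M : Matrix m n K) (s : Finset n)
    (hs : ∀ j ∉ s, ∀ i, M i j = 0) : M.rank ≤ s.card := by
  rw [← rank_transpose]
  exact rank_le_card_of_row_eq_zero Mᵀ s fun j hj => funext (hs j hj)

end Matrix

section Coefficients

variable {K : Type*} [Field K] {p d : ℕ}

noncomputable def multiIndex (idx : Fin d → Fin p) : Fin d →₀ ℕ :=
  Finsupp.equivFunOnFinite.symm fun j => idx j

theorem multiIndex_injective : Function.Injective (multiIndex (d := d) (p := p)) :=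
  fun _ _ h => funext fun j => Fin.ext (DFunLike.congr_fun h j)

noncomputable def tensorPoly (θ : (Fin d → Fin p) → K) : MvPolynomial (Fin d) K :=
  ∑ idx, monomial (multiIndex idx) (θ idx)

theorem eval_tensorPoly (θ : (Fin d → Fin p) → K) (x : Fin d → K) :
    eval x (tensorPoly θ) = ∑ idx, θ idx * ∏ k, x k ^ (idx k : ℕ) := by
  simp only [tensorPoly, map_sum, eval_monomial,
    Finsupp.prod_fintype _ _ fun i => pow_zero (x i)]
  rfl

theorem coeff_tensorPoly (θ : (Fin d → Fin p) → K) (idx : Fin d → Fin p) :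
    (tensorPoly θ).coeff (multiIndex idx) = θ idx := by
  classical
  simp [tensorPoly, coeff_sum, coeff_monomial, multiIndex_injective.eq_iff]

theorem eq_zero_of_notMem_vars [Infinite K] [NeZero p] {θ : (Fin d → Fin p) → K}
    {Q : MvPolynomial (Fin d) K}
    (hQ : ∀ x, ∑ idx, θ idx * ∏ k, x k ^ (idx k : ℕ) = eval x Q) {idx : Fin d → Fin p}
    {j : Fin d} (hj : j ∉ Q.vars) (hidx : idx j ≠ 0) : θ idx = 0 := by
  have hθQ : tensorPoly θ = Q := MvPolynomial.funext fun x => (eval_tensorPoly θ x).trans (hQ x)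
  by_contra hne
  refine hj ((mem_vars_iff_mem_support j).2 ⟨multiIndex idx, ?_, ?_⟩)
  · rwa [← hθQ, mem_support_iff, coeff_tensorPoly]
  · exact Finsupp.mem_support_iff.2 (Fin.val_ne_zero_iff.2 hidx)

end Coefficients

section Unfolding

variable {p d k : ℕ}

theorem unfold_apply_split (θ : (Fin d → Fin p) → ℝ) (hkd : k ≤ d) (idx : Fin d → Fin p) :
    unfold p d k θ (fun i => idx ⟨i, by omega⟩) (fun j => idx ⟨k + j, by omega⟩) = θ idx := by
  refine congrArg θ (funext fun i => ?_)
  split_ifs with h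
  · rfl
  · exact congrArg idx (Fin.ext (by simp; omega))

theorem one_le_rank_unfold {θ : (Fin d → Fin p) → ℝ} (hkd : k ≤ d) (hθ : θ ≠ 0) :
    1 ≤ (unfold p d k θ).rank := by
  obtain ⟨idx, hidx⟩ := Function.ne_iff.1 hθ
  refine Matrix.rank_pos_of_ne_zero fun h => hidx ?_
  rw [← unfold_apply_split θ hkd idx, h]
  rfl

variable {R : Type*} [Zero R] [NeZero p]

def DependsOnlyOnIcc (θ : (Fin d → Fin p) → R) (a b : ℕ) : Prop :=
  ∀ (idx : Fin d → Fin p) (j : Fin d), idx j ≠ 0 → (j : ℕ) < a ∨ b < j → θ idx = 0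

variable {θ : (Fin d → Fin p) → ℝ} {a b : ℕ}

theorem unfold_apply_eq_zero_of_left (hθ : DependsOnlyOnIcc θ a b) (hkd : k ≤ d)
    {r : Fin k → Fin p} (c : Fin (d - k) → Fin p) {j : Fin k} (hj : (j : ℕ) < a)
    (hrj : r j ≠ 0) : unfold p d k θ r c = 0 :=
  hθ _ ⟨j, by omega⟩ (by simpa using hrj) (Or.inl hj)

theorem unfold_apply_eq_zero_of_right (hθ : DependsOnlyOnIcc θ a b) (r : Fin k → Fin p)
    {c : Fin (d - k) → Fin p} {j : Fin (d - k)} (hj : b < k + j) (hcj : c j ≠ 0) :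
    unfold p d k θ r c = 0 :=
  hθ _ ⟨k + j, by omega⟩ (by simpa using hcj) (Or.inr hj)

theorem rank_unfold_le_one_of_le (hθ : DependsOnlyOnIcc θ a b) (hk : k ≤ a) (hkd : k ≤ d) :
    (unfold p d k θ).rank ≤ 1 := by
  refine Matrix.rank_le_card_of_row_eq_zero _ {0} fun r hr => funext fun c => ?_
  obtain ⟨j, hj⟩ := Function.ne_iff.1 (Finset.notMem_singleton.1 hr)
  exact unfold_apply_eq_zero_of_left hθ hkd c (by omega) hj

theorem rank_unfold_le_one_of_lt (hθ : DependsOnlyOnIcc θ a b) (hk : b < k) :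
    (unfold p d k θ).rank ≤ 1 := by
  refine Matrix.rank_le_card_of_col_eq_zero _ {0} fun c hc r => ?_
  obtain ⟨j, hj⟩ := Function.ne_iff.1 (Finset.notMem_singleton.1 hc)
  exact unfold_apply_eq_zero_of_right hθ r (by omega) hj

theorem rank_unfold_le_of_left_eq_succ (hθ : DependsOnlyOnIcc θ a b) (hk : k = a + 1)
    (hkd : k ≤ d) : (unfold p d k θ).rank ≤ p := by
  classical
  subst hk
  let last : Fin (a + 1) := Fin.last a
  calc (unfold p d (a + 1) θ).rank
      ≤ (Finset.univ.image fun i => (Pi.single last i : Fin (a + 1) → Fin p)).card := by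
        refine Matrix.rank_le_card_of_row_eq_zero _ _ fun r hr => funext fun c => ?_
        obtain ⟨j, hj⟩ : ∃ j, r j ≠ (Pi.single last (r last) : Fin (a + 1) → Fin p) j := by
          refine Function.ne_iff.1 fun h => hr ?_
          exact Finset.mem_image.2 ⟨r last, Finset.mem_univ _, h.symm⟩
        have hjl : j ≠ last := by rintro rfl; simp at hj
        refine unfold_apply_eq_zero_of_left hθ hkd c (j := j) ?_ (by simpa [hjl] using hj)
        exact lt_of_le_of_ne (Nat.lt_succ_iff.1 j.isLt) (fun h => hjl (Fin.ext h))
    _ ≤ p := Finset.card_image_le.trans (by simp)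

theorem rank_unfold_le_of_right_eq (hθ : DependsOnlyOnIcc θ a k) (hkd : k < d) :
    (unfold p d k θ).rank ≤ p := by
  classical
  let first : Fin (d - k) := ⟨0, by omega⟩
  calc (unfold p d k θ).rank
      ≤ (Finset.univ.image fun i => (Pi.single first i : Fin (d - k) → Fin p)).card := by
        refine Matrix.rank_le_card_of_col_eq_zero _ _ fun c hc r => ?_
        obtain ⟨j, hj⟩ : ∃ j, c j ≠ (Pi.single first (c first) : Fin (d - k) → Fin p) j := by
          refine Function.ne_iff.1 fun h => hc ?_
          exact Finset.mem_image.2 ⟨c first, Finset.mem_univ _, h.symm⟩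
        have hjf : j ≠ first := by rintro rfl; simp at hj
        refine unfold_apply_eq_zero_of_right hθ r (j := j) ?_ (by simpa [hjf] using hj)
        have : (j : ℕ) ≠ 0 := fun h => hjf (Fin.ext h)
        omega
    _ ≤ p := Finset.card_image_le.trans (by simp)

end Unfolding

section FPUT

variable {d : ℕ}

noncomputable def fputPoly (β : ℝ) (u v w : Fin d) : MvPolynomial (Fin d) ℝ :=
  (X w - 2 * X v + X u) + C β * (X w - X v) ^ 3 - C β * (X v - X u) ^ 3

theorem eval_fputPoly (β : ℝ) (u v w : Fin d) (x : Fin d → ℝ) :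
    eval x (fputPoly β u v w) =
      (x w - 2 * x v + x u) + β * (x w - x v) ^ 3 - β * (x v - x u) ^ 3 := by
  simp [fputPoly]

theorem vars_fputPoly_subset (β : ℝ) (u v w : Fin d) :
    ((fputPoly β u v w).vars : Set (Fin d)) ⊆ {u, v, w} := by
  refine mem_supported.1 ?_
  rw [fputPoly]
  apply_rules [Subalgebra.sub_mem, Subalgebra.add_mem, Subalgebra.mul_mem, Subalgebra.pow_mem,
    X_mem_supported.2, Subalgebra.algebraMap_mem, ofNat_mem] <;> simp

end FPUT

/-- The coefficient tensor `θ_l` (monomial dictionary `{1,x,x²,x³}`, `p̃ = 4`)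
of the FPUT right-hand side
`f_l(x) = (x_{l+1} − 2x_l + x_{l-1}) + β(x_{l+1} − x_l)³ − β(x_l − x_{l-1})³`
(`l` 1-based with `1 < l < d`) has `k`-th unfolding rank at most `4` for `k ∈ {l−1, l}`
and unfolding rank exactly `1` for all other cuts `k`. -/
theorem stmt13 (d : ℕ) (β : ℝ) (l : ℕ) (hl1 : 1 < l) (hl2 : l < d)
    (θ : (Fin d → Fin 4) → ℝ)
    (hθ : ∀ x : Fin d → ℝ,
      (∑ idx : Fin d → Fin 4, θ idx * ∏ k : Fin d, x k ^ (idx k : ℕ)) =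
        (x ⟨l, by omega⟩ - 2 * x ⟨l - 1, by omega⟩ + x ⟨l - 2, by omega⟩)
        + β * (x ⟨l, by omega⟩ - x ⟨l - 1, by omega⟩) ^ 3
        - β * (x ⟨l - 1, by omega⟩ - x ⟨l - 2, by omega⟩) ^ 3) :
    ∀ (k : ℕ) (_hk1 : 1 ≤ k) (_hk2 : k ≤ d - 1),
      ((k = l - 1 ∨ k = l) → (unfold 4 d k θ).rank ≤ 4) ∧
      (k ≠ l - 1 → k ≠ l → (unfold 4 d k θ).rank = 1) := by
  intro k hk1 hk2
  have hwindow : DependsOnlyOnIcc θ (l - 2) l := by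
    intro idx j hidx hj
    refine eq_zero_of_notMem_vars (fun x => (hθ x).trans (eval_fputPoly β _ _ _ x).symm)
      (fun hvars => ?_) hidx
    have := vars_fputPoly_subset β _ _ _ hvars
    simp only [Set.mem_insert_iff, Set.mem_singleton_iff, Fin.ext_iff] at this
    omega
  -- `f_l` takes the values `1 + β` and `2 + 8β` at `e_l` and `2 e_l`, which cannot both vanish.
  have hne : θ ≠ 0 := by
    rintro rfl
    have h1 := hθ (Pi.single ⟨l, hl2⟩ 1)
    have h2 := hθ (Pi.single ⟨l, hl2⟩ 2)
    have hv : (⟨l - 1, by omega⟩ : Fin d) ≠ ⟨l, hl2⟩ := by simp [Fin.ext_iff]; omega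
    have hu : (⟨l - 2, by omega⟩ : Fin d) ≠ ⟨l, hl2⟩ := by simp [Fin.ext_iff]; omega
    simp only [Pi.zero_apply, zero_mul, Finset.sum_const_zero, Pi.single_eq_same,
      Pi.single_eq_of_ne hv, Pi.single_eq_of_ne hu] at h1 h2
    linarith
  refine ⟨?_, fun hk1 hk2 => le_antisymm ?_ (one_le_rank_unfold (by omega) hne)⟩
  · rintro (rfl | rfl)
    · exact rank_unfold_le_of_left_eq_succ hwindow (by omega) (by omega)
    · exact rank_unfold_le_of_right_eq hwindow (by omega)
  · rcases (by omega : k ≤ l - 2 ∨ l < k) with hk | hk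
    · exact rank_unfold_le_one_of_le hwindow hk (by omega)
    · exact rank_unfold_le_one_of_lt hwindow hk
end

section
/- Let θ ∈ ℝ^{p̃^d} and let P = {A, B} be a bipartition of {1,…,d}. Let {ψ_i}_{i=1}^{p̃} be linearly independent. Then the separation rank of f^θ with respect to P (the minimal r such that f^θ = ∑_{j=1}^r u_j · w_j with u_j depending only on variables indexed by A and w_j only on variables indexed by B, each in the respective span of products of ψ's) equals the rank of the matricization of θ obtained by grouping the indices in A as rows and the indices in B as columns. -/
/-- The matricization of a tensor `θ ∈ ℝ^{p^d}` with respect to the bipartition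
`{A, Aᶜ}` of the legs: indices in `A` become rows, indices in `Aᶜ` become columns. -/
def matricize (p d : ℕ) (A : Finset (Fin d)) (θ : (Fin d → Fin p) → ℝ) :
    Matrix (↥A → Fin p) (↥Aᶜ → Fin p) ℝ :=
  fun a b => θ (fun i => if h : i ∈ A then a ⟨i, h⟩ else b ⟨i, Finset.mem_compl.mpr h⟩)

/-!
Write `f^θ(x) = φ_A(x_A) ⬝ᵥ M *ᵥ φ_B(x_B)` with `M` the matricization and
`φ_S(y)_a = ∏_{i ∈ S} ψ_{a_i}(y_i)`. A factorisation `M = X * Y` through `rank M` columns then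
splits `f^θ` into `rank M` separated terms. Conversely, linear independence of the `ψ_i` gives
points `t_1, …, t_p` at which `Φ = (ψ_i(t_k))` is invertible; sampling a separated representation
with `r` terms on the grid `t^A × t^{Aᶜ}` yields `Φ_Aᵀ * M * Φ_B = U * Wᵀ`, where `Φ_A`, `Φ_B` are
Kronecker powers of `Φ` and hence invertible, so `rank M ≤ r`.
-/

open Matrix

namespace Matrix

theorem exists_eq_mul_fin_rank {m n K : Type*} [Fintype m] [Fintype n] [Field K]
    (A : Matrix m n K) :
    ∃ (X : Matrix m (Fin A.rank) K) (Y : Matrix (Fin A.rank) n K), A = X * Y := by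
  classical
  let β := Module.finBasis K (LinearMap.range A.mulVecLin)
  have hcol (b : n) : A.col b ∈ LinearMap.range A.mulVecLin :=
    ⟨Pi.single b 1, A.mulVec_single_one b⟩
  refine ⟨of fun a j => (β j : m → K) a, of fun j b => β.repr ⟨A.col b, hcol b⟩ j, ?_⟩
  ext a b
  have h := congrArg (fun v : LinearMap.range A.mulVecLin => (v : m → K) a)
    (β.sum_repr ⟨A.col b, hcol b⟩)
  simp only [Submodule.coe_sum, Submodule.coe_smul, Finset.sum_apply, Pi.smul_apply, smul_eq_mul,
    col_apply] at h
  simp only [mul_apply, of_apply, ← h]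
  exact Finset.sum_congr rfl fun _ _ => mul_comm _ _

variable {m n k l R : Type*} [Fintype m] [Fintype n] [CommSemiring R]

theorem dotProduct_mul_mulVec {r : Type*} [Fintype r] (v : m → R) (X : Matrix m r R)
    (Y : Matrix r n R) (w : n → R) :
    v ⬝ᵥ (X * Y) *ᵥ w = ∑ j, (v ᵥ* X) j * (Y *ᵥ w) j := by
  rw [← mulVec_mulVec, dotProduct_mulVec, dotProduct]

theorem transpose_mul_mul_apply (P : Matrix m k R) (M : Matrix m n R) (Q : Matrix n l R)
    (y : k) (z : l) : (Pᵀ * M * Q) y z = P.col y ⬝ᵥ M *ᵥ Q.col z := by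
  rw [Matrix.mul_assoc, mul_apply, dotProduct]
  simp [mul_apply, mulVec, dotProduct]

section PiKronecker

variable (ι : Type*) [Fintype ι] {κ₁ κ₂ κ₃ : Type*}

def piKronecker (P : Matrix κ₁ κ₂ R) : Matrix (ι → κ₁) (ι → κ₂) R :=
  of fun a b => ∏ i, P (a i) (b i)

theorem piKronecker_mul [DecidableEq ι] [Fintype κ₂] (P : Matrix κ₁ κ₂ R) (Q : Matrix κ₂ κ₃ R) :
    piKronecker ι (P * Q) = piKronecker ι P * piKronecker ι Q := by
  ext a c
  simp only [piKronecker, mul_apply, of_apply, ← Finset.prod_mul_distrib]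
  exact Fintype.prod_sum fun i j => P (a i) j * Q j (c i)

theorem piKronecker_one [DecidableEq κ₁] :
    piKronecker ι (1 : Matrix κ₁ κ₁ R) = 1 := by
  ext a b
  by_cases h : a = b
  · subst h; simp [piKronecker]
  · obtain ⟨i, hi⟩ := Function.ne_iff.mp h
    simpa [piKronecker, one_apply, h] using Finset.prod_eq_zero (Finset.mem_univ i) (if_neg hi)

def piKroneckerHom [DecidableEq ι] [Fintype κ₁] [DecidableEq κ₁] :
    Matrix κ₁ κ₁ R →* Matrix (ι → κ₁) (ι → κ₁) R where
  toFun := piKronecker ι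
  map_one' := piKronecker_one ι
  map_mul' := piKronecker_mul ι

end PiKronecker

end Matrix

theorem LinearIndependent.span_range_eval_eq_top {ι X K : Type*} [Fintype ι] [Field K]
    {ψ : ι → X → K} (hψ : LinearIndependent K ψ) :
    Submodule.span K (Set.range fun x i => ψ i x) = ⊤ := by
  classical
  by_contra hne
  obtain ⟨f, hf, hle⟩ := Submodule.exists_le_ker_of_lt_top _ (lt_top_iff_ne_top.mpr hne)
  have hc : ∑ i, f (Pi.single i 1) • ψ i = 0 := by
    ext x
    have hx : f (fun i => ψ i x) = 0 := hle (Submodule.subset_span ⟨x, rfl⟩)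
    rw [Pi.zero_apply, ← hx, pi_eq_sum_univ' (fun i => ψ i x)]
    simp [mul_comm]
  exact hf (LinearMap.pi_ext' fun i => LinearMap.ext_ring
    (Fintype.linearIndependent_iff.mp hψ _ hc i))

theorem LinearIndependent.exists_isUnit_eval {ι X K : Type*} [Fintype ι] [DecidableEq ι]
    [Field K] {ψ : ι → X → K} (hψ : LinearIndependent K ψ) :
    ∃ pts : ι → X, IsUnit (of fun i k => ψ i (pts k)) := by
  obtain ⟨f, hf_mem, -, hf_li⟩ :=
    Submodule.exists_fun_fin_finrank_span_eq K (Set.range fun x i => ψ i x)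
  choose x hx using hf_mem
  have hcard : Fintype.card ι =
      Module.finrank K (Submodule.span K (Set.range fun x i => ψ i x)) := by
    rw [hψ.span_range_eval_eq_top, finrank_top, Module.finrank_fintype_fun_eq_card]
  let e := Fintype.equivFinOfCardEq hcard
  refine ⟨x ∘ e, linearIndependent_cols_iff_isUnit.mp ?_⟩
  have hcol : (of fun i k => ψ i ((x ∘ e) k)).col = f ∘ e := by
    ext k i
    simp [← hx]
  rw [hcol]
  exact hf_li.comp e e.injective

def prodEval {ι κ X R : Type*} [Fintype ι] [CommMonoid R] (ψ : κ → X → R) (x : ι → X) :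
    (ι → κ) → R :=
  fun a => ∏ i, ψ (a i) (x i)

theorem Matrix.col_piKronecker_eval {ι κ X R : Type*} [Fintype ι] [CommSemiring R]
    (ψ : κ → X → R) (pts : κ → X) (y : ι → κ) :
    (piKronecker ι (of fun i k => ψ i (pts k))).col y = prodEval ψ (pts ∘ y) :=
  rfl

section PiSplit

variable {ι : Type*} [Fintype ι] [DecidableEq ι] (A : Finset ι) (β : Type*)

def Finset.piSplitEquiv : ((A → β) × (↥Aᶜ → β)) ≃ (ι → β) where
  toFun ab i := if h : i ∈ A then ab.1 ⟨i, h⟩ else ab.2 ⟨i, Finset.mem_compl.mpr h⟩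
  invFun f := (fun i => f i, fun i => f i)
  left_inv := by
    rintro ⟨a, b⟩
    refine Prod.ext ?_ ?_ <;> funext i
    · exact dif_pos i.prop
    · exact dif_neg (Finset.mem_compl.mp i.prop)
  right_inv f := by
    funext i
    by_cases h : i ∈ A
    · exact dif_pos h
    · exact dif_neg h

variable {A β}

@[simp]
theorem Finset.piSplitEquiv_apply_coe_mem (a : A → β) (b : ↥Aᶜ → β) (i : A) :
    A.piSplitEquiv β (a, b) i = a i :=
  dif_pos i.prop

@[simp]
theorem Finset.piSplitEquiv_apply_coe_mem_compl (a : A → β) (b : ↥Aᶜ → β) (i : ↥Aᶜ) :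
    A.piSplitEquiv β (a, b) i = b i :=
  dif_neg (Finset.mem_compl.mp i.prop)

theorem Finset.prod_piSplitEquiv {M : Type*} [CommMonoid M] (g : ι → β → M)
    (a : A → β) (b : ↥Aᶜ → β) :
    ∏ k, g k (A.piSplitEquiv β (a, b) k) = (∏ i : A, g i (a i)) * ∏ i : ↥Aᶜ, g i (b i) := by
  rw [← Finset.prod_mul_prod_compl A, ← Finset.prod_coe_sort A, ← Finset.prod_coe_sort Aᶜ]
  simp

end PiSplit

theorem matricize_apply (p d : ℕ) (A : Finset (Fin d)) (θ : (Fin d → Fin p) → ℝ)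
    (a : A → Fin p) (b : ↥Aᶜ → Fin p) :
    matricize p d A θ a b = θ (A.piSplitEquiv (Fin p) (a, b)) :=
  rfl

theorem sum_mul_prod_eq_dotProduct_matricize {p d : ℕ} {X : Type*} (ψ : Fin p → X → ℝ)
    (A : Finset (Fin d)) (θ : (Fin d → Fin p) → ℝ) (x : Fin d → X) :
    ∑ idx : Fin d → Fin p, θ idx * ∏ k, ψ (idx k) (x k) =
      prodEval ψ (fun i : A => x i) ⬝ᵥ matricize p d A θ *ᵥ prodEval ψ (fun i : ↥Aᶜ => x i) := by
  rw [← (A.piSplitEquiv (Fin p)).sum_comp, Fintype.sum_prod_type]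
  simp only [dotProduct, mulVec, Finset.mul_sum, matricize_apply, prodEval,
    Finset.prod_piSplitEquiv (fun k j => ψ j (x k))]
  exact Finset.sum_congr rfl fun a _ => Finset.sum_congr rfl fun b _ => by ring

theorem rank_matricize_le_of_eq_sum_mul {p d r : ℕ} {X : Type*} {ψ : Fin p → X → ℝ}
    (hψ : LinearIndependent ℝ ψ) (A : Finset (Fin d)) (θ : (Fin d → Fin p) → ℝ)
    (u : Fin r → (A → X) → ℝ) (w : Fin r → (↥Aᶜ → X) → ℝ)
    (h : ∀ x : Fin d → X, ∑ idx : Fin d → Fin p, θ idx * ∏ k, ψ (idx k) (x k) =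
      ∑ j, u j (fun i => x i) * w j (fun i => x i)) :
    (matricize p d A θ).rank ≤ r := by
  classical
  obtain ⟨pts, hpts⟩ := hψ.exists_isUnit_eval
  set Φ := of fun i k => ψ i (pts k)
  let U : Matrix (A → Fin p) (Fin r) ℝ := of fun y j => u j (pts ∘ y)
  let W : Matrix (↥Aᶜ → Fin p) (Fin r) ℝ := of fun z j => w j (pts ∘ z)
  have hsample : (piKronecker A Φ)ᵀ * matricize p d A θ * piKronecker (↥Aᶜ) Φ = U * Wᵀ := by
    ext y z
    have hyz := h (A.piSplitEquiv X (pts ∘ y, pts ∘ z))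
    rw [sum_mul_prod_eq_dotProduct_matricize ψ A] at hyz
    simp only [Finset.piSplitEquiv_apply_coe_mem,
      Finset.piSplitEquiv_apply_coe_mem_compl] at hyz
    rw [transpose_mul_mul_apply, col_piKronecker_eval, col_piKronecker_eval, mul_apply]
    exact hyz
  have hunit (ι : Type) [Fintype ι] [DecidableEq ι] : IsUnit (piKronecker ι Φ).det :=
    (isUnit_iff_isUnit_det _).mp (hpts.map (piKroneckerHom ι))
  calc (matricize p d A θ).rank
      = ((piKronecker A Φ)ᵀ * matricize p d A θ * piKronecker (↥Aᶜ) Φ).rank := by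
        rw [rank_mul_eq_left_of_isUnit_det _ _ (hunit _), rank_mul_eq_right_of_isUnit_det]
        simpa using hunit A
    _ = (U * Wᵀ).rank := by rw [hsample]
    _ ≤ U.rank := rank_mul_le_left _ _
    _ ≤ r := (rank_le_card_width U).trans (by simp)

/-- For linearly independent `{ψ_i}` and a bipartition `{A, Aᶜ}` of the
variables, the separation rank of `f^θ` with respect to the bipartition — the minimal `r`
such that `f^θ = ∑_{j=1}^r u_j · w_j` with `u_j` depending only on variables in `A` and
`w_j` only on variables in `Aᶜ` — equals the rank of the matricization of `θ` grouping the
indices in `A` as rows and those in `Aᶜ` as columns. -/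
theorem stmt15 (p d : ℕ) (ψ : Fin p → ℝ → ℝ) (hψ : LinearIndependent ℝ ψ)
    (A : Finset (Fin d)) (θ : (Fin d → Fin p) → ℝ) :
    sInf {r : ℕ | ∃ u : Fin r → (↥A → ℝ) → ℝ,
        ∃ w : Fin r → (↥Aᶜ → ℝ) → ℝ,
        ∀ x : Fin d → ℝ,
          (∑ idx : Fin d → Fin p, θ idx * ∏ k : Fin d, ψ (idx k) (x k)) =
            ∑ j : Fin r, u j (fun i => x i) * w j (fun i => x i)} =
      (matricize p d A θ).rank := by
  refine IsLeast.csInf_eq ⟨?_, fun r ⟨u, w, h⟩ => rank_matricize_le_of_eq_sum_mul hψ A θ u w h⟩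
  obtain ⟨X, Y, hXY⟩ := (matricize p d A θ).exists_eq_mul_fin_rank
  refine ⟨fun j y => (prodEval ψ y ᵥ* X) j, fun j z => (Y *ᵥ prodEval ψ z) j, fun x => ?_⟩
  rw [sum_mul_prod_eq_dotProduct_matricize ψ A, ← dotProduct_mul_mulVec, ← hXY]
end

section
/- Let A ⊆ {1,…,d} with complement B, and suppose θ ∈ ℝ^{p̃^d} decomposes as θ = u ⊗_P w for u ∈ ℝ^{p̃^{|A|}}, w ∈ ℝ^{p̃^{|B|}} (tensor product along the partition P = {A,B}, i.e., θ's matricization M_{A,B}(θ) = u w^T). Then for any bipartition {A', B'} with A ⊆ A' (hence B' ⊆ B), the rank of M_{A',B'}(θ) is at most the rank of the matricization of w with respect to the induced partition {A'∖A, B'} of B. In particular, tensoring with a rank-one factor on a block of variables does not increase separation ranks across cuts refining that block. -/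
namespace Matrix

variable {m m' n R : Type*} [Fintype m] [Fintype n] [CommSemiring R] [StrongRankCondition R]

theorem rank_le_of_apply_eq_mul_apply (M : Matrix m n R) (N : Matrix m' n R) (f : m → R)
    (g : m → m') (h : ∀ i j, M i j = f i * N (g i) j) : M.rank ≤ N.rank := by
  classical
  have hM : M = diagonal f * N.submatrix g id := by
    ext i j
    rw [diagonal_mul, submatrix_apply, id, h]
  calc M.rank ≤ (N.submatrix g id).rank := hM ▸ rank_mul_le_right _ _
    _ ≤ N.rank := rank_submatrix_le N g id

end Matrix

/-- If `θ = u ⊗_P w` along the bipartition `{A, Aᶜ}` (i.e. `θ` is the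
rank-one tensor product of `u` on block `A` with `w` on block `Aᶜ`), then for any
bipartition `{A', A'ᶜ}` with `A ⊆ A'`, the rank of the matricization of `θ` with respect
to `{A', A'ᶜ}` is at most the rank of the matricization of `w` with respect to the induced
partition `{A' \ A, A'ᶜ}` of `Aᶜ`. -/
theorem stmt16 (p d : ℕ) (A A' : Finset (Fin d)) (hAA' : A ⊆ A')
    (u : (↥A → Fin p) → ℝ) (w : (↥Aᶜ → Fin p) → ℝ)
    (θ : (Fin d → Fin p) → ℝ)
    (hθ : ∀ idx : Fin d → Fin p,
      θ idx = u (fun i => idx i) * w (fun i => idx i)) :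
    (matricize p d A' θ).rank ≤
      Matrix.rank (fun (a : ↥(A' \ A) → Fin p) (b : ↥A'ᶜ → Fin p) =>
        w (fun i => if h : (i : Fin d) ∈ A' then
            a ⟨i, Finset.mem_sdiff.mpr ⟨h, Finset.mem_compl.mp i.2⟩⟩
          else b ⟨i, Finset.mem_compl.mpr h⟩)) := by
  refine Matrix.rank_le_of_apply_eq_mul_apply _ _
    (fun a => u fun i => a ⟨i, hAA' i.2⟩) (fun a j => a ⟨j, Finset.sdiff_subset j.2⟩)
    fun a b => ?_
  rw [matricize, hθ]
  congr 2
  funext i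
  simp [hAA' i.2]
end
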